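/- arXiv:1104.5044 — 3 statements merged into one kernel-verified Lean document; each statement's English description precedes it below -/
import Mathlib

section
/- Let p : G → H be a surjective group homomorphism with kernel N, and let S be a symmetric generating set of G with S_H = {p(s) : s ∈ S, s ∉ N}. Then S_H is a symmetric generating set of H and λ₁(H, S_H) ≤ λ₁(G, S). -/
/-- The word length of `g` with respect to a generating set `S`. -/
noncomputable def wordLen {G : Type*} [Group G] (S : Set G) (g : G) : ℕ :=
  sInf {k | ∃ l : List G, (∀ x ∈ l, x ∈ S) ∧ l.length = k ∧ l.prod = g}

/-- `λ₁(G,S) = max_{g ∈ G, s ∈ S} l_S(g⁻¹ s g)`. -/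
noncomputable def lam1 {G : Type*} [Group G] (S : Set G) : ℕ :=
  sSup {m | ∃ g : G, ∃ s ∈ S, m = wordLen S (g⁻¹ * s * g)}

/-! Applying `p` to a word in `S` and deleting the letters that land on `1` gives a word in `S_H`
that is no longer, so `l_{S_H}(p g) ≤ l_S(g)`. Every conjugate `h⁻¹ t h` with `t ∈ S_H` is the image
of a conjugate `g⁻¹ s g` with `s ∈ S`, which bounds `λ₁(H, S_H)` by `λ₁(G, S)`. -/

section WordLength

variable {G H : Type*} [Group G] [Group H]

theorem Submonoid.closure_eq_top_of_symm {S : Set G} (hsym : ∀ s ∈ S, s⁻¹ ∈ S)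
    (hgen : Subgroup.closure S = ⊤) : Submonoid.closure S = ⊤ := by
  have hinv : S⁻¹ ⊆ S := fun s hs => by simpa using hsym _ hs
  rw [← Set.union_eq_left.2 hinv, ← Subgroup.closure_toSubmonoid, hgen, Subgroup.top_toSubmonoid]

theorem wordLen_prod_le_length {S : Set G} {l : List G} (hl : ∀ x ∈ l, x ∈ S) :
    wordLen S l.prod ≤ l.length :=
  Nat.sInf_le ⟨l, hl, rfl, rfl⟩

theorem exists_length_eq_wordLen {S : Set G} {g : G} (hg : g ∈ Submonoid.closure S) :
    ∃ l : List G, (∀ x ∈ l, x ∈ S) ∧ l.length = wordLen S g ∧ l.prod = g := by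
  obtain ⟨l, hl, rfl⟩ := Submonoid.exists_list_of_mem_closure hg
  have hne : {k | ∃ l' : List G, (∀ x ∈ l', x ∈ S) ∧ l'.length = k ∧ l'.prod = l.prod}.Nonempty :=
    ⟨l.length, l, hl, rfl, rfl⟩
  exact Nat.sInf_mem hne

theorem MonoidHom.exists_list_prod_eq_map_prod (f : G →* H) {S : Set G} {T : Set H}
    (hT : ∀ s ∈ S, s ∉ f.ker → f s ∈ T) {l : List G} (hl : ∀ x ∈ l, x ∈ S) :
    ∃ l' : List H, (∀ y ∈ l', y ∈ T) ∧ l'.length ≤ l.length ∧ l'.prod = f l.prod := by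
  induction l with
  | nil => exact ⟨[], by simp, le_rfl, by simp⟩
  | cons a t ih =>
    obtain ⟨l', hl'T, hlen, hprod⟩ := ih fun x hx => hl x (List.mem_cons_of_mem a hx)
    by_cases ha : a ∈ f.ker
    · refine ⟨l', hl'T, hlen.trans (Nat.le_succ _), ?_⟩
      rw [hprod, List.prod_cons, map_mul, f.mem_ker.1 ha, one_mul]
    · refine ⟨f a :: l', ?_, Nat.succ_le_succ hlen, ?_⟩
      · rintro y (_ | ⟨_, hy⟩)
        · exact hT a (hl a List.mem_cons_self) ha
        · exact hl'T y hy
      · rw [List.prod_cons, hprod, List.prod_cons, map_mul]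

theorem wordLen_map_le (f : G →* H) {S : Set G} {T : Set H}
    (hT : ∀ s ∈ S, s ∉ f.ker → f s ∈ T) {g : G} (hg : g ∈ Submonoid.closure S) :
    wordLen T (f g) ≤ wordLen S g := by
  obtain ⟨l, hlS, hlen, rfl⟩ := exists_length_eq_wordLen hg
  obtain ⟨l', hl'T, hlen', hprod⟩ := f.exists_list_prod_eq_map_prod hT hlS
  calc wordLen T (f l.prod) = wordLen T l'.prod := by rw [hprod]
    _ ≤ l'.length := wordLen_prod_le_length hl'T
    _ ≤ l.length := hlen'
    _ = wordLen S l.prod := hlen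

theorem wordLen_conj_le_lam1 [Finite G] {S : Set G} {s : G} (hs : s ∈ S) (g : G) :
    wordLen S (g⁻¹ * s * g) ≤ lam1 S := by
  refine le_csSup ?_ ⟨g, s, hs, rfl⟩
  refine (Set.finite_range (wordLen S)).bddAbove.mono ?_
  rintro _ ⟨g, s, -, rfl⟩
  exact ⟨_, rfl⟩

theorem Subgroup.closure_eq_top_of_surjective (f : G →* H) (hf : Function.Surjective f)
    {S : Set G} {T : Set H} (hgen : Subgroup.closure S = ⊤)
    (hT : ∀ s ∈ S, s ∉ f.ker → f s ∈ T) : Subgroup.closure T = ⊤ := by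
  rw [eq_top_iff, ← MonoidHom.range_eq_top.2 hf, MonoidHom.range_eq_map, ← hgen,
    MonoidHom.map_closure, Subgroup.closure_le]
  rintro _ ⟨s, hs, rfl⟩
  by_cases hk : s ∈ f.ker
  · rw [f.mem_ker.1 hk]
    exact one_mem _
  · exact Subgroup.subset_closure (hT s hs hk)

end WordLength

theorem stmt_9_general {G H : Type*} [Group G] [Group H] [Finite G]
    (p : G →* H) (hp : Function.Surjective p)
    (S : Set G) (hsym : ∀ s ∈ S, s⁻¹ ∈ S) (hgen : Subgroup.closure S = ⊤)
    (SH : Set H) (hSH : SH = {h | ∃ s ∈ S, s ∉ p.ker ∧ p s = h}) :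
    (∀ x ∈ SH, x⁻¹ ∈ SH) ∧ Subgroup.closure SH = ⊤ ∧ lam1 SH ≤ lam1 S := by
  subst hSH
  have hT : ∀ s ∈ S, s ∉ p.ker → p s ∈ {h | ∃ s ∈ S, s ∉ p.ker ∧ p s = h} :=
    fun s hs hk => ⟨s, hs, hk, rfl⟩
  refine ⟨?_, Subgroup.closure_eq_top_of_surjective p hp hgen hT, csSup_le' ?_⟩
  · rintro _ ⟨s, hs, hk, rfl⟩
    exact ⟨s⁻¹, hsym s hs, by rwa [inv_mem_iff], map_inv p s⟩
  · rintro _ ⟨h, _, ⟨s, hs, hk, rfl⟩, rfl⟩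
    obtain ⟨g, rfl⟩ := hp h
    have hword : g⁻¹ * s * g ∈ Submonoid.closure S :=
      Submonoid.closure_eq_top_of_symm hsym hgen ▸ Submonoid.mem_top _
    calc wordLen _ ((p g)⁻¹ * p s * p g) = wordLen _ (p (g⁻¹ * s * g)) := by simp
      _ ≤ wordLen S (g⁻¹ * s * g) := wordLen_map_le p hT hword
      _ ≤ lam1 S := wordLen_conj_le_lam1 hs g

/-- if `p : G → H` is a surjective homomorphism with kernel `N`, and
`S_H = {p(s) : s ∈ S, s ∉ N}`, then `S_H` is a symmetric generating set of `H` and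
`λ₁(H, S_H) ≤ λ₁(G, S)`. -/
theorem stmt_9 {G H : Type*} [Group G] [Group H] [Finite G] [Finite H]
    (p : G →* H) (hp : Function.Surjective p)
    (S : Set G) (hsym : ∀ s ∈ S, s⁻¹ ∈ S) (hgen : Subgroup.closure S = ⊤)
    (hnotker : ¬ S ⊆ (p.ker : Set G))
    (SH : Set H) (hSH : SH = {h | ∃ s ∈ S, s ∉ p.ker ∧ p s = h}) :
    (∀ x ∈ SH, x⁻¹ ∈ SH) ∧ Subgroup.closure SH = ⊤ ∧ lam1 SH ≤ lam1 S :=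
  stmt_9_general p hp S hsym hgen SH hSH
end

section
/- Suppose a finite group G is an (internal) semidirect product of a normal subgroup N and subgroup H, with symmetric generating sets S_N of N and S_H of H, and S = S_N ∪ S_H. Then λ₁(H, S_H) ≤ λ₁(G, S) ≤ λ₁(H, S_H) + l_{S_N}(N), where l_{S_N}(N) is the diameter of Cay(N, S_N). -/
/-- `λ₁` restricted to a subset `X` of the group:
`max_{g ∈ X, s ∈ S} l_S(g⁻¹ s g)`.  Taking `X = Set.univ` gives `λ₁(G,S)`. -/
noncomputable def lam1On {G : Type*} [Group G] (X : Set G) (S : Set G) : ℕ :=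
  sSup {m | ∃ g ∈ X, ∃ s ∈ S, m = wordLen S (g⁻¹ * s * g)}

/-- The diameter of the Cayley graph of the subset `X` with respect to `S`:
`max_{g ∈ X} l_S(g)`. -/
noncomputable def diamOn {G : Type*} [Group G] (X : Set G) (S : Set G) : ℕ :=
  sSup {m | ∃ g ∈ X, m = wordLen S g}

/-!
Killing `N` maps `G` onto `G ⧸ N ≅ H` and sends the letters of `S_N` to `1`, so deleting the
`S_N`-letters of an `S`-word for an element of `H` leaves an `S_H`-word for the same element:
on `H` the two word lengths agree, which gives the lower bound. For the upper bound write
`g = n h` with `n ∈ N`, `h ∈ H`. A conjugate of `s ∈ S_N` lies in `N`; for `s ∈ S_H`,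
`g⁻¹ s g = (h⁻¹ [n⁻¹, s] h) (h⁻¹ s h)` is a product of an element of `N` and an `H`-conjugate
of `s`, whose lengths are bounded by `l_{S_N}(N)` and `λ₁(H, S_H)`.
-/

open Set

section WordLength

variable {G : Type*} [Group G] {S T : Set G} {g a b : G}

theorem wordLen_le_length {l : List G} (hl : ∀ x ∈ l, x ∈ S) (hg : l.prod = g) :
    wordLen S g ≤ l.length :=
  Nat.sInf_le ⟨l, hl, rfl, hg⟩

theorem exists_list_length_eq_wordLen (hg : g ∈ Submonoid.closure S) :
    ∃ l : List G, (∀ x ∈ l, x ∈ S) ∧ l.length = wordLen S g ∧ l.prod = g := by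
  obtain ⟨l, hl, hprod⟩ := Submonoid.exists_list_of_mem_closure hg
  exact Nat.sInf_mem (s := {k | ∃ l : List G, (∀ x ∈ l, x ∈ S) ∧ l.length = k ∧ l.prod = g})
    ⟨l.length, l, hl, rfl, hprod⟩

theorem wordLen_le_of_subset (hST : S ⊆ T) (hg : g ∈ Submonoid.closure S) :
    wordLen T g ≤ wordLen S g := by
  obtain ⟨l, hl, hlen, hprod⟩ := exists_list_length_eq_wordLen hg
  exact hlen ▸ wordLen_le_length (fun x hx => hST (hl x hx)) hprod

theorem wordLen_mul_le (ha : a ∈ Submonoid.closure S) (hb : b ∈ Submonoid.closure S) :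
    wordLen S (a * b) ≤ wordLen S a + wordLen S b := by
  obtain ⟨la, hla, hlena, rfl⟩ := exists_list_length_eq_wordLen ha
  obtain ⟨lb, hlb, hlenb, rfl⟩ := exists_list_length_eq_wordLen hb
  rw [← hlena, ← hlenb, ← List.length_append]
  refine wordLen_le_length (fun x hx => ?_) List.prod_append
  rcases List.mem_append.mp hx with hx | hx
  exacts [hla x hx, hlb x hx]

theorem lam1On_le {X : Set G} {m : ℕ} (h : ∀ g ∈ X, ∀ s ∈ S, wordLen S (g⁻¹ * s * g) ≤ m) :
    lam1On X S ≤ m :=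
  csSup_le' <| by
    rintro _ ⟨g, hg, s, hs, rfl⟩
    exact h g hg s hs

theorem le_lam1On [Finite G] {X : Set G} {s : G} (hg : g ∈ X) (hs : s ∈ S) :
    wordLen S (g⁻¹ * s * g) ≤ lam1On X S :=
  le_csSup ((finite_range (wordLen S)).bddAbove.mono <| by rintro _ ⟨g, -, s, -, rfl⟩; simp)
    ⟨g, hg, s, hs, rfl⟩

theorem le_diamOn [Finite G] {X : Set G} (hg : g ∈ X) : wordLen S g ≤ diamOn X S :=
  le_csSup ((finite_range (wordLen S)).bddAbove.mono <| by rintro _ ⟨g, -, rfl⟩; simp)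
    ⟨g, hg, rfl⟩

end WordLength

theorem MonoidHom.map_list_prod_filter {M M' : Type*} [Monoid M] [Monoid M'] (f : M →* M')
    (p : M → Bool) {l : List M} (hl : ∀ x ∈ l, p x = false → f x = 1) :
    f (l.filter p).prod = f l.prod := by
  induction l with
  | nil => rfl
  | cons x l ih =>
    have ih := ih fun y hy => hl y (List.mem_cons_of_mem x hy)
    cases hx : p x
    · simp [hx, ih, hl x List.mem_cons_self hx]
    · simp [hx, ih]

section Semidirect

variable {G : Type*} [Group G] {N H : Subgroup G} {SN SH : Set G} {a b g : G}

theorem eq_of_mk_eq_of_mem (hmeet : N ⊓ H = ⊥) (ha : a ∈ H) (hb : b ∈ H)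
    (hab : (a : G ⧸ N) = b) : a = b := by
  have hN : a⁻¹ * b ∈ N ⊓ H :=
    Subgroup.mem_inf.mpr ⟨QuotientGroup.eq.mp hab, H.mul_mem (H.inv_mem ha) hb⟩
  rw [hmeet, Subgroup.mem_bot, inv_mul_eq_one] at hN
  exact hN

theorem list_prod_filter_eq_of_mem [N.Normal] (hmeet : N ⊓ H = ⊥) {l : List G} (p : G → Bool)
    (hH : ∀ x ∈ l, p x = true → x ∈ H) (hN : ∀ x ∈ l, p x = false → x ∈ N) (hl : l.prod ∈ H) :
    (l.filter p).prod = l.prod :=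
  eq_of_mk_eq_of_mem hmeet
    (Subgroup.list_prod_mem _ fun x hx => hH x (List.mem_of_mem_filter hx)
      (List.of_mem_filter hx)) hl
    ((QuotientGroup.mk' N).map_list_prod_filter p fun x hx hpx =>
      (QuotientGroup.eq_one_iff x).mpr (hN x hx hpx))

theorem wordLen_le_wordLen_union [N.Normal] (hmeet : N ⊓ H = ⊥) (hSN : SN ⊆ N) (hSH : SH ⊆ H)
    (hx : g ∈ H) (hg : g ∈ Submonoid.closure (SN ∪ SH)) : wordLen SH g ≤ wordLen (SN ∪ SH) g := by
  classical
  obtain ⟨l, hl, hlen, rfl⟩ := exists_list_length_eq_wordLen hg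
  have hfilter : ∀ x ∈ l.filter (· ∈ SH), x ∈ SH := fun x hx => by
    simpa using List.of_mem_filter hx
  calc wordLen SH l.prod = wordLen SH (l.filter (· ∈ SH)).prod := by
        refine (congrArg _ (list_prod_filter_eq_of_mem hmeet _ (fun x _ hpx => ?_)
          (fun x hxl hpx => ?_) hx)).symm
        · exact hSH (of_decide_eq_true hpx)
        · exact hSN ((hl x hxl).resolve_right (of_decide_eq_false hpx))
    _ ≤ (l.filter (· ∈ SH)).length := wordLen_le_length hfilter rfl
    _ ≤ l.length := List.length_filter_le _ _
    _ = wordLen (SN ∪ SH) l.prod := hlen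

theorem wordLen_conj_le_lam1On_add_diamOn [Finite G] [N.Normal] (hjoin : N ⊔ H = ⊤)
    (hSN : SN ⊆ N) (hSH : SH ⊆ H)
    (hN : N.toSubmonoid ≤ Submonoid.closure SN) (hH : H.toSubmonoid ≤ Submonoid.closure SH)
    (g : G) {s : G} (hs : s ∈ SN ∪ SH) :
    wordLen (SN ∪ SH) (g⁻¹ * s * g) ≤ lam1On H SH + diamOn N SN := by
  obtain ⟨n, hn, h, hh, rfl⟩ := Subgroup.mem_sup_of_normal_left.mp (hjoin ▸ Subgroup.mem_top g)
  have hwN : ∀ a ∈ N, wordLen (SN ∪ SH) a ≤ diamOn N SN := fun a ha =>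
    (wordLen_le_of_subset subset_union_left (hN ha)).trans (le_diamOn ha)
  rcases hs with hs | hs
  · refine (hwN _ ?_).trans le_add_self
    simpa [mul_assoc] using ‹N.Normal›.conj_mem s (hSN hs) (n * h)⁻¹
  · set a := h⁻¹ * (n⁻¹ * (s * n * s⁻¹)) * h
    set b := h⁻¹ * s * h
    have hab : (n * h)⁻¹ * s * (n * h) = a * b := by simp only [a, b]; group
    have ha : a ∈ N := by
      have := mul_mem (inv_mem hn) (‹N.Normal›.conj_mem n hn s)
      simpa using ‹N.Normal›.conj_mem _ this h⁻¹
    have hb : b ∈ H := mul_mem (mul_mem (inv_mem hh) (hSH hs)) hh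
    rw [hab, add_comm]
    calc wordLen (SN ∪ SH) (a * b) ≤ wordLen (SN ∪ SH) a + wordLen (SN ∪ SH) b :=
          wordLen_mul_le (Submonoid.closure_mono subset_union_left (hN ha))
            (Submonoid.closure_mono subset_union_right (hH hb))
      _ ≤ diamOn N SN + lam1On H SH := add_le_add (hwN a ha)
          ((wordLen_le_of_subset subset_union_right (hH hb)).trans (le_lam1On hh hs))

end Semidirect

theorem stmt_11_general {G : Type*} [Group G] [Finite G] (N H : Subgroup G) [N.Normal]
    (hmeet : N ⊓ H = ⊥) (hjoin : N ⊔ H = ⊤)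
    (SN SH : Set G) (hSN : SN ⊆ (N : Set G)) (hSH : SH ⊆ (H : Set G))
    (hgenN : Subgroup.closure SN = N) (hgenH : Subgroup.closure SH = H) :
    lam1On (H : Set G) SH ≤ lam1On Set.univ (SN ∪ SH) ∧
    lam1On Set.univ (SN ∪ SH) ≤ lam1On (H : Set G) SH + diamOn (N : Set G) SN := by
  have hN : N.toSubmonoid ≤ Submonoid.closure SN := by
    rw [← hgenN, Subgroup.closure_toSubmonoid_of_finite]
  have hH : H.toSubmonoid ≤ Submonoid.closure SH := by
    rw [← hgenH, Subgroup.closure_toSubmonoid_of_finite]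
  constructor
  · refine lam1On_le fun h hh s hs => ?_
    have hx : h⁻¹ * s * h ∈ H := mul_mem (mul_mem (inv_mem hh) (hSH hs)) hh
    exact (wordLen_le_wordLen_union hmeet hSN hSH hx
      (Submonoid.closure_mono subset_union_right (hH hx))).trans
      (le_lam1On (mem_univ h) (Or.inr hs))
  · exact lam1On_le fun g _ s hs => wordLen_conj_le_lam1On_add_diamOn hjoin hSN hSH hN hH g hs

/-- if the finite group `G` is an internal semidirect product of a normal
subgroup `N` and a subgroup `H`, with symmetric generating sets `S_N` of `N` and `S_H`
of `H`, and `S = S_N ∪ S_H`, then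
`λ₁(H, S_H) ≤ λ₁(G, S) ≤ λ₁(H, S_H) + l_{S_N}(N)`. -/
theorem stmt_11 {G : Type*} [Group G] [Finite G] (N H : Subgroup G) [N.Normal]
    (hmeet : N ⊓ H = ⊥) (hjoin : N ⊔ H = ⊤)
    (SN SH : Set G) (hSN : SN ⊆ (N : Set G)) (hSH : SH ⊆ (H : Set G))
    (hsymN : ∀ s ∈ SN, s⁻¹ ∈ SN) (hsymH : ∀ s ∈ SH, s⁻¹ ∈ SH)
    (hgenN : Subgroup.closure SN = N) (hgenH : Subgroup.closure SH = H) :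
    lam1On (H : Set G) SH ≤ lam1On Set.univ (SN ∪ SH) ∧
    lam1On Set.univ (SN ∪ SH) ≤ lam1On (H : Set G) SH + diamOn (N : Set G) SN :=
  stmt_11_general N H hmeet hjoin SN SH hSN hSH hgenN hgenH
end

section
/- For n ≥ 3, λ₁(Σ_n, C_n) = 2n − 3, where C_n = {t_{i,i+1} : 1 ≤ i ≤ n−1} is the set of adjacent transpositions (Coxeter generators). -/
/-- The set of adjacent transpositions (Coxeter generators) in `Σ_n`. -/
def coxeterGens (n : ℕ) : Set (Equiv.Perm (Fin n)) :=
  {σ | ∃ i j : Fin n, (j : ℕ) = (i : ℕ) + 1 ∧ σ = Equiv.swap i j}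

/-!
Word length for the Coxeter generators is bounded below by the number of inversions, since
multiplying by an adjacent transposition creates at most one new inversion. The conjugates of
adjacent transpositions are exactly the transpositions, and `swap a b` (for `a < b`) has
`2 (b - a) - 1` inversions while also being a palindromic word of that length in adjacent
transpositions. Its length is therefore `2 (b - a) - 1`, maximal `2 n - 3` for `swap 0 (n - 1)`.
-/

open Equiv Finset

section WordLength

variable {G : Type*} [Group G] {S : Set G}

theorem wordLen_prod_le {l : List G} (hl : ∀ x ∈ l, x ∈ S) : wordLen S l.prod ≤ l.length :=
  Nat.sInf_le ⟨l, hl, rfl, rfl⟩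

theorem apply_prod_le_length (f : G → ℕ) (h_one : f 1 = 0)
    (h_mul : ∀ s ∈ S, ∀ g, f (s * g) ≤ f g + 1) {l : List G} (hl : ∀ x ∈ l, x ∈ S) :
    f l.prod ≤ l.length := by
  induction l with
  | nil => simp [h_one]
  | cons s l ih =>
    rw [List.prod_cons, List.length_cons]
    have hs : s ∈ S := hl s List.mem_cons_self
    have hrest := ih fun x hx => hl x (List.mem_cons_of_mem s hx)
    linarith [h_mul s hs l.prod]

theorem le_wordLen (f : G → ℕ) (h_one : f 1 = 0) (h_mul : ∀ s ∈ S, ∀ g, f (s * g) ≤ f g + 1)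
    {g : G} (hg : ∃ l : List G, (∀ x ∈ l, x ∈ S) ∧ l.prod = g) : f g ≤ wordLen S g := by
  obtain ⟨l, hl, rfl⟩ := hg
  refine le_csInf ⟨_, l, hl, rfl, rfl⟩ ?_
  rintro k ⟨l', hl', rfl, hprod⟩
  exact hprod ▸ apply_prod_le_length f h_one h_mul hl'

theorem lam1_eq_of_isGreatest {m : ℕ} (h_le : ∀ g, ∀ s ∈ S, wordLen S (g⁻¹ * s * g) ≤ m)
    {g s : G} (hs : s ∈ S) (h_eq : wordLen S (g⁻¹ * s * g) = m) : lam1 S = m :=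
  IsGreatest.csSup_eq ⟨⟨g, s, hs, h_eq.symm⟩, by rintro _ ⟨g, s, hs, rfl⟩; exact h_le g s hs⟩

end WordLength

section Inversions

variable {n : ℕ}

def inversions (σ : Perm (Fin n)) : Finset (Fin n × Fin n) :=
  univ.filter fun p => p.1 < p.2 ∧ σ p.2 < σ p.1

@[simp]
theorem mem_inversions {σ : Perm (Fin n)} {p : Fin n × Fin n} :
    p ∈ inversions σ ↔ p.1 < p.2 ∧ σ p.2 < σ p.1 := by
  simp [inversions]

theorem inversions_one : inversions (1 : Perm (Fin n)) = ∅ := by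
  ext p
  simpa using le_of_lt

theorem card_inversions_swap_mul_le {i j : Fin n} (hij : (j : ℕ) = i + 1) (τ : Perm (Fin n)) :
    #(inversions (swap i j * τ)) ≤ #(inversions τ) + 1 := by
  have hsub : inversions (swap i j * τ) ⊆ insert (τ⁻¹ i, τ⁻¹ j) (inversions τ) := by
    rintro ⟨x, y⟩ hp
    rw [mem_inversions, Perm.mul_apply, Perm.mul_apply] at hp
    obtain ⟨hxy, hswap⟩ := hp
    -- only the adjacent pair `(i, j)` itself changes its relative order
    have : τ y < τ x ∨ (τ x = i ∧ τ y = j) := by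
      rw [swap_apply_def, swap_apply_def] at hswap
      split_ifs at hswap <;> simp only [Fin.lt_def, Fin.ext_iff] at * <;> omega
    rcases this with hlt | ⟨rfl, rfl⟩
    · exact mem_insert_of_mem (mem_inversions.mpr ⟨hxy, hlt⟩)
    · simp
  exact (card_le_card hsub).trans (card_insert_le _ _)

theorem le_card_inversions_swap {a b : Fin n} (hab : a < b) :
    2 * ((b : ℕ) - a) - 1 ≤ #(inversions (swap a b)) := by
  set A := (Ioc a b).image fun c => (a, c)
  set B := (Ioo a b).image fun c => (c, b)
  have hA : #A = b - a := by
    rw [card_image_of_injective _ (Prod.mk_right_injective a), Fin.card_Ioc]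
  have hB : #B = b - a - 1 := by
    rw [card_image_of_injective _ (Prod.mk_left_injective b), Fin.card_Ioo]
  have hdisj : Disjoint A B := by
    simp only [A, B, disjoint_left, mem_image, mem_Ioo]
    rintro _ ⟨c, -, rfl⟩ ⟨d, ⟨had, -⟩, hd⟩
    exact had.ne (congrArg Prod.fst hd).symm
  have hsub : A ∪ B ⊆ inversions (swap a b) := by
    refine union_subset ?_ ?_ <;> intro p hp <;>
      simp only [A, B, mem_image, mem_Ioc, mem_Ioo] at hp <;> obtain ⟨c, ⟨hac, hcb⟩, rfl⟩ := hp <;>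
      simp only [mem_inversions, swap_apply_def] <;>
      split_ifs <;> simp only [Fin.lt_def, Fin.le_def, Fin.ext_iff] at * <;> omega
  calc 2 * ((b : ℕ) - a) - 1 = #(A ∪ B) := by
        rw [card_union_of_disjoint hdisj, hA, hB]; omega
    _ ≤ #(inversions (swap a b)) := card_le_card hsub

end Inversions

section CoxeterLength

variable {n : ℕ}

theorem swap_mem_coxeterGens {i j : Fin n} (hij : (j : ℕ) = i + 1) : swap i j ∈ coxeterGens n :=
  ⟨i, j, hij, rfl⟩

/-- `swap a (a + d + 1) = s · swap (a + 1) (a + d + 1) · s` with `s = swap a (a + 1)`. -/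
theorem exists_coxeter_word_swap (d : ℕ) :
    ∀ a b : Fin n, (b : ℕ) = a + d + 1 → ∃ l : List (Perm (Fin n)),
      (∀ x ∈ l, x ∈ coxeterGens n) ∧ l.length = 2 * d + 1 ∧ l.prod = swap a b := by
  induction d with
  | zero =>
    intro a b hb
    exact ⟨[swap a b], by simpa using swap_mem_coxeterGens hb, rfl, by simp⟩
  | succ d ih =>
    intro a b hb
    set a' : Fin n := ⟨a + 1, by omega⟩
    obtain ⟨l, hl, hlen, hprod⟩ := ih a' b (by simp only [a']; omega)
    have hs : swap a a' ∈ coxeterGens n := swap_mem_coxeterGens rfl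
    refine ⟨swap a a' :: (l ++ [swap a a']), ?_, ?_, ?_⟩
    · simp only [List.mem_cons, List.mem_append, List.not_mem_nil, or_false]
      rintro x (rfl | hx | rfl)
      exacts [hs, hl x hx, hs]
    · simp only [List.length_cons, List.length_append, List.length_nil, hlen]; ring
    · have hba : b ≠ a := fun h => by rw [h] at hb; omega
      have hba' : b ≠ a' := fun h => by rw [h] at hb; simp only [a'] at hb; omega
      have h := swap_apply_apply (swap a a') a' b
      rw [swap_inv, swap_apply_right, swap_apply_of_ne_of_ne hba hba'] at h
      rw [List.prod_cons, List.prod_append, List.prod_singleton, hprod, ← mul_assoc, h]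

theorem wordLen_swap {a b : Fin n} (hab : a < b) :
    wordLen (coxeterGens n) (swap a b) = 2 * ((b : ℕ) - a) - 1 := by
  have hab' : (a : ℕ) < b := hab
  obtain ⟨l, hl, hlen, hprod⟩ := exists_coxeter_word_swap ((b : ℕ) - a - 1) a b (by omega)
  have hlen' : l.length = 2 * ((b : ℕ) - a) - 1 := by omega
  refine le_antisymm (hlen' ▸ hprod ▸ wordLen_prod_le hl) ?_
  refine (le_card_inversions_swap hab).trans
    (le_wordLen (fun σ => #(inversions σ)) ?_ ?_ ⟨l, hl, hprod⟩)
  · rw [inversions_one, card_empty]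
  · rintro _ ⟨i, j, hij, rfl⟩ τ
    exact card_inversions_swap_mul_le hij τ

theorem wordLen_swap_le (a b : Fin n) : wordLen (coxeterGens n) (swap a b) ≤ 2 * n - 3 := by
  rcases lt_trichotomy a b with hab | rfl | hab
  · rw [wordLen_swap hab]; omega
  · rw [swap_self, ← Perm.one_def, ← List.prod_nil]
    exact (wordLen_prod_le (by simp)).trans (Nat.zero_le _)
  · rw [swap_comm, wordLen_swap hab]; omega

end CoxeterLength

/-- for `n ≥ 3`, `λ₁(Σ_n, C_n) = 2n − 3`. -/
theorem stmt_14 (n : ℕ) (hn : 3 ≤ n) :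
    lam1 (coxeterGens n) = 2 * n - 3 := by
  have conj_swap (g : Perm (Fin n)) (i j : Fin n) : g⁻¹ * swap i j * g = swap (g⁻¹ i) (g⁻¹ j) := by
    rw [swap_apply_apply, inv_inv]
  let z : Fin n := ⟨0, by omega⟩
  let o : Fin n := ⟨1, by omega⟩
  let w : Fin n := ⟨n - 1, by omega⟩
  -- conjugating `swap 0 1` by `swap 1 (n - 1)` gives `swap 0 (n - 1)`
  refine lam1_eq_of_isGreatest (g := swap o w) (s := swap z o) ?_ (swap_mem_coxeterGens rfl) ?_
  · rintro g _ ⟨i, j, -, rfl⟩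
    rw [conj_swap]
    exact wordLen_swap_le _ _
  · have hzo : z ≠ o := by simp [z, o, Fin.ext_iff]
    have hzw : z < w := Fin.lt_def.mpr (show 0 < n - 1 by omega)
    rw [conj_swap, swap_inv, swap_apply_of_ne_of_ne hzo hzw.ne, swap_apply_left, wordLen_swap hzw]
    show 2 * (n - 1 - 0) - 1 = 2 * n - 3
    omega
end
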